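/- arXiv:1808.06185 — 3 statements merged into one kernel-verified Lean document; each statement's English description precedes it below -/
import Mathlib

section
/- Let R be a commutative ring with Jacobson radical J(R) and M a finitely generated R-module with a decreasing filtration by R-submodules M = M_0 ⊇ M_1 ⊇ M_2 ⊇ ⋯ such that M_d ⊆ J(R)·M for some d ≥ 1. Then for every i ≥ 1 and every R-linear map φ : M → M with φ(M_j) ⊆ M_{j+i} for all j ≥ 0, the map 1 + φ is an R-module automorphism of M whose inverse is again of the form 1 + ψ with ψ R-linear and ψ(M_j) ⊆ M_{j+i} for all j; that is, GL^{(i)}_R(M) = {1 + φ : φ ∈ End^{(i)}_R(M)}. -/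
variable {R M : Type*} [CommRing R] [AddCommGroup M] [Module R M]

/-- `End^{(i)}_R` : R-linear endomorphisms shifting the filtration by `i`. -/
def EndFil (Mf : ℕ → Submodule R M) (i : ℕ) : Set (Module.End R M) :=
  {φ | ∀ j : ℕ, ∀ x ∈ Mf j, φ x ∈ Mf (j + i)}

/-- `GL^{(i)}_R` (for `i ≥ 1`): units `g` such that `g` and `g⁻¹` preserve the filtration
and `g - 1`, `g⁻¹ - 1` lie in `End^{(i)}_R`. -/
def GLFil (Mf : ℕ → Submodule R M) (i : ℕ) : Set (Module.End R M)ˣ :=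
  {u | (∀ j : ℕ, ∀ x ∈ Mf j, (u : Module.End R M) x ∈ Mf j) ∧
    (∀ j : ℕ, ∀ x ∈ Mf j, ((u⁻¹ : (Module.End R M)ˣ) : Module.End R M) x ∈ Mf j) ∧
    ((u : Module.End R M) - 1) ∈ EndFil Mf i ∧
    (((u⁻¹ : (Module.End R M)ˣ) : Module.End R M) - 1) ∈ EndFil Mf i}

/-- if `M` is a finitely generated module over a commutative ring `R`,
filtered by submodules with `M_d ⊆ J(R)·M` for some `d ≥ 1` (where `J(R)` is the
Jacobson radical), then for every `i ≥ 1`,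
`GL^{(i)}_R(M) = {1 + φ : φ ∈ End^{(i)}_R(M)}`; in particular every `1 + φ` with
`φ ∈ End^{(i)}_R(M)` is an automorphism whose inverse lies in `1 + End^{(i)}_R(M)`. -/
theorem statement1 [Module.Finite R M]
    (Mf : ℕ → Submodule R M) (hMf0 : Mf 0 = ⊤) (hMf : Antitone Mf)
    (d : ℕ) (hd : 1 ≤ d)
    (hJac : Mf d ≤ (⊥ : Ideal R).jacobson • (⊤ : Submodule R M)) :
    ∀ i : ℕ, 1 ≤ i →
      (∀ φ ∈ EndFil Mf i, ∃ u : (Module.End R M)ˣ,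
          u ∈ GLFil Mf i ∧ (u : Module.End R M) = 1 + φ) ∧
      GLFil Mf i
        = {u : (Module.End R M)ˣ | ∃ φ ∈ EndFil Mf i, (u : Module.End R M) = 1 + φ} := by
  intro i hi
  have key : ∀ φ ∈ EndFil Mf i, ∃ u : (Module.End R M)ˣ,
      u ∈ GLFil Mf i ∧ (u : Module.End R M) = 1 + φ := by
    intro φ hφ
    -- surjectivity of 1 + φ
    have happrox : ∀ k : ℕ, ∀ x : M, ∃ y : M, x - (1 + φ) y ∈ Mf (k * i) := by
      intro k
      induction k with
      | zero => intro x; exact ⟨0, by simp [hMf0]⟩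
      | succ k ih =>
        intro x
        obtain ⟨y, hy⟩ := ih x
        refine ⟨y + (x - (1 + φ) y), ?_⟩
        have h1 : x - (1 + φ) (y + (x - (1 + φ) y)) = -(φ (x - (1 + φ) y)) := by
          simp only [LinearMap.add_apply, Module.End.one_apply, map_add]
          abel
        rw [h1]
        have := hφ _ _ hy
        have hle : Mf (k * i + i) ≤ Mf ((k + 1) * i) := hMf (by ring_nf; omega)
        exact neg_mem (hle this)
    have hsurj : Function.Surjective (1 + φ : Module.End R M) := by
      have hle : (⊤ : Submodule R M) ≤
          LinearMap.range (1 + φ : Module.End R M) ⊔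
            (⊥ : Ideal R).jacobson • (⊤ : Submodule R M) := by
        intro x _
        obtain ⟨y, hy⟩ := happrox d x
        have hx : x = (1 + φ) y + (x - (1 + φ) y) := by abel
        rw [hx]
        refine Submodule.add_mem_sup (LinearMap.mem_range_self _ y) ?_
        exact hJac (hMf (Nat.le_mul_of_pos_right d hi) hy)
      have := Submodule.le_of_le_smul_of_le_jacobson_bot Module.Finite.fg_top le_rfl hle
      rw [← LinearMap.range_eq_top]
      exact top_le_iff.mp this
    have hinj : Function.Injective (1 + φ : Module.End R M) :=
      OrzechProperty.injective_of_surjective_endomorphism _ hsurj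
    have hu : IsUnit (1 + φ : Module.End R M) :=
      (Module.End.isUnit_iff _).mpr ⟨hinj, hsurj⟩
    refine ⟨hu.unit, ?_, hu.unit_spec⟩
    -- u⁻¹ preserves the filtration
    have hinvfil : ∀ j : ℕ, ∀ x ∈ Mf j,
        ((hu.unit⁻¹ : (Module.End R M)ˣ) : Module.End R M) x ∈ Mf j := by
      intro j x hx
      set y := ((hu.unit⁻¹ : (Module.End R M)ˣ) : Module.End R M) x with hy
      have hxy : (1 + φ) y = x := by
        have : ((hu.unit : Module.End R M) * ((hu.unit⁻¹ : (Module.End R M)ˣ) :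
            Module.End R M)) x = x := by
          rw [hu.unit.mul_inv]; rfl
        rw [hu.unit_spec] at this
        exact this
      have hstep : ∀ k : ℕ, y ∈ Mf (min j (k * i)) := by
        intro k
        induction k with
        | zero => simp [hMf0]
        | succ k ih =>
          have hφy : φ y ∈ Mf (min j (k * i) + i) := hφ _ _ ih
          have hyx : y = x - φ y := by
            have := hxy
            simp only [LinearMap.add_apply, Module.End.one_apply] at this
            rw [← this]; abel
          rw [hyx]
          have h1 : Mf j ≤ Mf (min j ((k + 1) * i)) := hMf (min_le_left _ _)
          have h2 : Mf (min j (k * i) + i) ≤ Mf (min j ((k + 1) * i)) := by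
            apply hMf
            have : (k + 1) * i = k * i + i := by ring
            omega
          exact sub_mem (h1 hx) (h2 hφy)
      have := hstep j
      rwa [min_eq_left (Nat.le_mul_of_pos_right j hi)] at this
    have hinvEnd : (((hu.unit⁻¹ : (Module.End R M)ˣ) : Module.End R M) - 1)
        ∈ EndFil Mf i := by
      intro j x hx
      have hy := hinvfil j x hx
      set y := ((hu.unit⁻¹ : (Module.End R M)ˣ) : Module.End R M) x
      have hxy : (1 + φ) y = x := by
        have : ((hu.unit : Module.End R M) * ((hu.unit⁻¹ : (Module.End R M)ˣ) :
            Module.End R M)) x = x := by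
          rw [hu.unit.mul_inv]; rfl
        rw [hu.unit_spec] at this
        exact this
      simp only [LinearMap.add_apply, Module.End.one_apply] at hxy
      have h1 : (((hu.unit⁻¹ : (Module.End R M)ˣ) : Module.End R M) - 1) x = -(φ y) := by
        simp only [LinearMap.sub_apply, Module.End.one_apply]
        show y - x = -(φ y)
        rw [← hxy]; abel
      rw [h1]
      exact neg_mem (hφ _ _ hy)
    refine ⟨?_, hinvfil, ?_, hinvEnd⟩
    · intro j x hx
      rw [hu.unit_spec]
      simp only [LinearMap.add_apply, Module.End.one_apply]
      exact add_mem hx (hMf (by omega) (hφ _ _ hx))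
    · intro j x hx
      rw [hu.unit_spec]
      simpa using hφ _ _ hx
  refine ⟨key, ?_⟩
  ext u
  constructor
  · rintro ⟨_, _, h1, _⟩
    exact ⟨(u : Module.End R M) - 1, h1, by abel⟩
  · rintro ⟨φ, hφ, hu⟩
    obtain ⟨v, hv, hveq⟩ := key φ hφ
    have : u = v := Units.ext (by rw [hu, hveq])
    rw [this]
    exact hv
end

section
/- Fix i ≥ 1 and let φ : R → R be a 𝕜-linear map with φ(m^j) ⊆ m^{j+i} for all j ≥ 0. Then 1 + φ is a 𝕜-algebra automorphism of R if and only if φ satisfies the 'almost Leibniz rule' φ(f₁f₂) = φ(f₁)f₂ + f₁φ(f₂) + φ(f₁)φ(f₂) for all f₁, f₂ ∈ R. Consequently, the group Aut^{(i)}_𝕜(R) of 𝕜-algebra automorphisms g with g − 1 and g^{-1} − 1 mapping m^j into m^{j+i} for all j equals {1 + φ : φ 𝕜-linear, φ(m^j) ⊆ m^{j+i} for all j, and φ satisfies the almost Leibniz rule}. -/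
/-!
If `φ` raises the `m`-adic filtration, then `1 + φ` is bijective on the `m`-adically complete
ring `R`: its kernel lies in `⋂ mⁿ = 0`, and the Neumann series `∑ₖ (-φ)ᵏ f` converges to a
preimage of `f`. The almost Leibniz rule says exactly that `1 + φ` is multiplicative, and a
bijective multiplicative linear map fixes `1`, so `1 + φ` is an algebra automorphism. Conversely,
for `g = 1 + φ` the map `g⁻¹ - 1 = -φ ∘ g⁻¹` raises the filtration by `i` as well, since `g⁻¹`
preserves every `mʲ`.
-/

/-- The maximal ideal `m = (x_1, …, x_p)` of the formal power series ring. -/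
noncomputable def mIdeal (𝕜 : Type*) [CommRing 𝕜] (p : ℕ) : Ideal (MvPowerSeries (Fin p) 𝕜) :=
  Ideal.span (Set.range (MvPowerSeries.X : Fin p → MvPowerSeries (Fin p) 𝕜))

/-- The 'almost Leibniz rule' for a map `φ`. -/
def AlmostLeibniz {𝕜 : Type*} [CommRing 𝕜] {p : ℕ}
    (φ : MvPowerSeries (Fin p) 𝕜 →ₗ[𝕜] MvPowerSeries (Fin p) 𝕜) : Prop :=
  ∀ f₁ f₂ : MvPowerSeries (Fin p) 𝕜,
    φ (f₁ * f₂) = φ f₁ * f₂ + f₁ * φ f₂ + φ f₁ * φ f₂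

open Finset

section AdicFiltration

variable {R S M : Type*} [CommRing R] [Semiring S] [AddCommGroup M] [Module R M] [Module S M]

def RaisesAdicFiltration (I : Ideal R) (φ : Module.End S M) : Prop :=
  ∀ n, ∀ x ∈ (I ^ n • ⊤ : Submodule R M), φ x ∈ (I ^ (n + 1) • ⊤ : Submodule R M)

variable {I : Ideal R} {φ : Module.End S M}

namespace RaisesAdicFiltration

lemma neg (hφ : RaisesAdicFiltration I φ) : RaisesAdicFiltration I (-φ) :=
  fun n x hx => neg_mem (hφ n x hx)

lemma pow_apply_mem (hφ : RaisesAdicFiltration I φ) (k : ℕ) (x : M) :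
    (φ ^ k) x ∈ (I ^ k • ⊤ : Submodule R M) := by
  induction k with
  | zero => simp
  | succ k ih => rw [pow_succ' φ, Module.End.mul_apply]; exact hφ k _ ih

lemma mem_of_one_add_apply_mem (hφ : RaisesAdicFiltration I φ) {n : ℕ} {x : M}
    (hx : (1 + φ) x ∈ (I ^ n • ⊤ : Submodule R M)) : x ∈ (I ^ n • ⊤ : Submodule R M) := by
  induction n with
  | zero => simp
  | succ n ih =>
    rw [← add_sub_cancel_right x (φ x)]
    exact sub_mem hx (hφ n x (ih (Submodule.pow_smul_top_le I M n.le_succ hx)))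

lemma injective_one_add [IsHausdorff I M] (hφ : RaisesAdicFiltration I φ) :
    Function.Injective ⇑(1 + φ) := by
  refine (injective_iff_map_eq_zero (1 + φ)).2 fun x hx =>
    IsHausdorff.haus' (I := I) x fun n => ?_
  rw [SModEq.zero]
  exact hφ.mem_of_one_add_apply_mem (hx ▸ zero_mem _)

lemma surjective_one_add [IsAdicComplete I M] (hφ : RaisesAdicFiltration I φ) :
    Function.Surjective ⇑(1 + φ) := by
  intro y
  let s : ℕ → M := fun n => ∑ k ∈ range n, ((-φ) ^ k) y
  have hs_image : ∀ n, (1 + φ) (s n) = y - ((-φ) ^ n) y := fun n => by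
    have := DFunLike.congr_fun (mul_neg_geom_sum (-φ) n) y
    rwa [sub_neg_eq_add, Module.End.mul_apply, LinearMap.sum_apply] at this
  obtain ⟨L, hL⟩ := IsPrecomplete.prec' (I := I) s fun {m n} hmn => by
    rw [SModEq.sub_mem, ← neg_sub, neg_mem_iff, ← sum_Ico_eq_sub _ hmn]
    exact Submodule.sum_mem _ fun k hk =>
      Submodule.pow_smul_top_le I M (mem_Ico.1 hk).1 (hφ.neg.pow_apply_mem k y)
  refine ⟨L, (IsHausdorff.eq_iff_smodEq (I := I)).2 fun n => ?_⟩
  have hLn : L - s n ∈ (I ^ n • ⊤ : Submodule R M) := by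
    rw [← neg_sub, neg_mem_iff, ← SModEq.sub_mem]; exact hL n
  have hsplit : (1 + φ) L - y = (1 + φ) (L - s n) - ((-φ) ^ n) y := by
    rw [map_sub, hs_image]; abel
  rw [SModEq.sub_mem, hsplit]
  exact sub_mem (add_mem hLn (Submodule.pow_smul_top_le I M n.le_succ (hφ n _ hLn)))
    (hφ.neg.pow_apply_mem n y)

lemma bijective_one_add [IsAdicComplete I M] (hφ : RaisesAdicFiltration I φ) :
    Function.Bijective ⇑(1 + φ) :=
  ⟨hφ.injective_one_add, hφ.surjective_one_add⟩

end RaisesAdicFiltration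

end AdicFiltration

lemma Ideal.pow_smul_top {A : Type*} [CommRing A] (I : Ideal A) (n : ℕ) :
    (I ^ n • ⊤ : Submodule A A) = I ^ n := by
  rw [smul_eq_mul, Ideal.mul_top]

lemma RaisesAdicFiltration.of_pow_add {A S : Type*} [CommRing A] [Semiring S] [Module S A]
    {I : Ideal A} {i : ℕ} (hi : 1 ≤ i) {φ : Module.End S A}
    (hφ : ∀ j, ∀ f ∈ I ^ j, φ f ∈ I ^ (j + i)) : RaisesAdicFiltration I φ := by
  simp only [RaisesAdicFiltration, Ideal.pow_smul_top]
  exact fun n x hx => Ideal.pow_le_pow_right (by omega) (hφ n x hx)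

instance (𝕜 : Type*) [CommRing 𝕜] (p : ℕ) :
    IsAdicComplete (mIdeal 𝕜 p) (MvPowerSeries (Fin p) 𝕜) :=
  inferInstanceAs (IsAdicComplete (Ideal.span (Set.range MvPowerSeries.X)) _)

noncomputable def AlgEquiv.ofBijectiveMapMul {R A B : Type*} [CommSemiring R] [Semiring A]
    [Semiring B] [Algebra R A] [Algebra R B] (l : A →ₗ[R] B) (hl : Function.Bijective l)
    (map_mul : ∀ x y, l (x * y) = l x * l y) : A ≃ₐ[R] B :=
  let e := LinearEquiv.ofBijective l hl
  AlgEquiv.ofLinearEquiv e (map_one (MulEquiv.mk e.toEquiv map_mul)) map_mul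

lemma almostLeibniz_iff {𝕜 : Type*} [CommRing 𝕜] {p : ℕ}
    (φ : MvPowerSeries (Fin p) 𝕜 →ₗ[𝕜] MvPowerSeries (Fin p) 𝕜) :
    AlmostLeibniz φ ↔ ∀ f₁ f₂, f₁ * f₂ + φ (f₁ * f₂) = (f₁ + φ f₁) * (f₂ + φ f₂) :=
  forall₂_congr fun f₁ f₂ => ⟨fun h => by rw [h]; ring, fun h => by linear_combination h⟩

theorem statement2_general (𝕜 : Type*) [CommRing 𝕜] (p : ℕ) (i : ℕ) (hi : 1 ≤ i) :
    (∀ φ : MvPowerSeries (Fin p) 𝕜 →ₗ[𝕜] MvPowerSeries (Fin p) 𝕜,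
      (∀ j : ℕ, ∀ f ∈ (mIdeal 𝕜 p) ^ j, φ f ∈ (mIdeal 𝕜 p) ^ (j + i)) →
      ((∃ ψ : MvPowerSeries (Fin p) 𝕜 ≃ₐ[𝕜] MvPowerSeries (Fin p) 𝕜,
          ∀ f, ψ f = f + φ f) ↔ AlmostLeibniz φ)) ∧
    {g : MvPowerSeries (Fin p) 𝕜 ≃ₐ[𝕜] MvPowerSeries (Fin p) 𝕜 |
        (∀ j : ℕ, ∀ f ∈ (mIdeal 𝕜 p) ^ j, g f - f ∈ (mIdeal 𝕜 p) ^ (j + i)) ∧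
        (∀ j : ℕ, ∀ f ∈ (mIdeal 𝕜 p) ^ j, g.symm f - f ∈ (mIdeal 𝕜 p) ^ (j + i))}
      = {g : MvPowerSeries (Fin p) 𝕜 ≃ₐ[𝕜] MvPowerSeries (Fin p) 𝕜 |
        ∃ φ : MvPowerSeries (Fin p) 𝕜 →ₗ[𝕜] MvPowerSeries (Fin p) 𝕜,
          (∀ j : ℕ, ∀ f ∈ (mIdeal 𝕜 p) ^ j, φ f ∈ (mIdeal 𝕜 p) ^ (j + i)) ∧
          AlmostLeibniz φ ∧ ∀ f, g f = f + φ f} := by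
  refine ⟨fun φ hφ => ⟨fun ⟨ψ, hψ⟩ => ?_, fun hL => ?_⟩, Set.ext fun g => ⟨?_, ?_⟩⟩
  · exact (almostLeibniz_iff φ).2 fun f₁ f₂ => by simp only [← hψ, map_mul]
  · exact ⟨AlgEquiv.ofBijectiveMapMul (1 + φ)
      (RaisesAdicFiltration.of_pow_add hi hφ).bijective_one_add ((almostLeibniz_iff φ).1 hL),
      fun _ => rfl⟩
  · rintro ⟨hg, -⟩
    exact ⟨g.toLinearMap - LinearMap.id, hg,
      (almostLeibniz_iff _).2 fun f₁ f₂ => by simp, fun f => by simp⟩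
  · rintro ⟨φ, hφ, -, hgφ⟩
    refine ⟨fun j f hf => by simpa [hgφ] using hφ j f hf, fun j f hf => ?_⟩
    have hφ' := RaisesAdicFiltration.of_pow_add hi hφ
    have hsymm : g.symm f + φ (g.symm f) = f := (hgφ _).symm.trans (g.apply_symm_apply f)
    have hgf : g.symm f ∈ mIdeal 𝕜 p ^ j := by
      rw [← Ideal.pow_smul_top] at hf ⊢
      exact hφ'.mem_of_one_add_apply_mem (by rwa [← hsymm] at hf)
    have hsub : g.symm f - f = -φ (g.symm f) := by linear_combination hsymm
    exact hsub ▸ neg_mem (hφ j _ hgf)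

/-- for a 𝕜-linear `φ` with `φ(m^j) ⊆ m^{j+i}` (`i ≥ 1`), the map `1 + φ`
is a 𝕜-algebra automorphism of `R = 𝕜[[x_1,…,x_p]]` iff `φ` satisfies the almost
Leibniz rule; consequently `Aut^{(i)}_𝕜(R)` equals the set of all `1 + φ` with `φ`
𝕜-linear, filtration-shifting by `i`, satisfying the almost Leibniz rule. -/
theorem statement2 (𝕜 : Type*) [CommRing 𝕜] (p : ℕ) (hp : 1 ≤ p) (i : ℕ) (hi : 1 ≤ i) :
    (∀ φ : MvPowerSeries (Fin p) 𝕜 →ₗ[𝕜] MvPowerSeries (Fin p) 𝕜,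
      (∀ j : ℕ, ∀ f ∈ (mIdeal 𝕜 p) ^ j, φ f ∈ (mIdeal 𝕜 p) ^ (j + i)) →
      ((∃ ψ : MvPowerSeries (Fin p) 𝕜 ≃ₐ[𝕜] MvPowerSeries (Fin p) 𝕜,
          ∀ f, ψ f = f + φ f) ↔ AlmostLeibniz φ)) ∧
    {g : MvPowerSeries (Fin p) 𝕜 ≃ₐ[𝕜] MvPowerSeries (Fin p) 𝕜 |
        (∀ j : ℕ, ∀ f ∈ (mIdeal 𝕜 p) ^ j, g f - f ∈ (mIdeal 𝕜 p) ^ (j + i)) ∧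
        (∀ j : ℕ, ∀ f ∈ (mIdeal 𝕜 p) ^ j, g.symm f - f ∈ (mIdeal 𝕜 p) ^ (j + i))}
      = {g : MvPowerSeries (Fin p) 𝕜 ≃ₐ[𝕜] MvPowerSeries (Fin p) 𝕜 |
        ∃ φ : MvPowerSeries (Fin p) 𝕜 →ₗ[𝕜] MvPowerSeries (Fin p) 𝕜,
          (∀ j : ℕ, ∀ f ∈ (mIdeal 𝕜 p) ^ j, φ f ∈ (mIdeal 𝕜 p) ^ (j + i)) ∧
          AlmostLeibniz φ ∧ ∀ f, g f = f + φ f} :=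
  statement2_general 𝕜 p i hi
end

section
/- For every 𝕜-algebra automorphism g of R such that g − 1 and g^{-1} − 1 map I_j into I_{j+1} for all j ≥ 0, the series ln(g)(f) := Σ_{j≥1} (−1)^{j+1}(g−1)^j(f)/j converges in the filtration topology for every f ∈ R and defines a 𝕜-linear derivation ξ := ln(g) of R with ξ(I_j) ⊆ I_{j+1} for all j; moreover, for every f ∈ R with ord((g−1)(f)) < ∞ one has ord((g − 1 − ξ)(f)) > ord((g−1)(f)). -/
/-!
Modulo `I_m` the operator `N = g - 1` is nilpotent of order `m`, so for every `x` the sequence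
`n ↦ gⁿ x = ∑ₖ (n choose k) Nᵏ x` is, modulo `I_m`, a polynomial in `n` whose linear coefficient
is the truncated logarithm `∑_{k ≤ m} (-1)^(k+1) Nᵏ x / k`. Since every `gⁿ` is multiplicative and
a polynomial over a `ℚ`-algebra is determined by its values at the natural numbers, these
polynomials are multiplicative in `x`, and comparing linear coefficients gives the Leibniz rule
for the truncated logarithm modulo `I_m`. Completeness turns the truncations into a derivation `ξ`;
the estimates on `ξ` follow from `N (I_j) ⊆ I_{j+1}`, the term `k = 1` of the series being `N`.
-/

variable {𝕜 R : Type*} [CommRing 𝕜] [Algebra ℚ 𝕜] [CommRing R] [Algebra 𝕜 R]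
  [Algebra ℚ R] [IsScalarTower ℚ 𝕜 R]

/-- Compatible families in `Π j, R ⧸ I_j`, i.e. the inverse limit `lim_← R/I_j`. -/
def compatFamilies (I : ℕ → Ideal R) (hI : Antitone I) :
    Submodule R (∀ j : ℕ, R ⧸ I j) where
  carrier := {v | ∀ j k : ℕ, ∀ h : j ≤ k,
    Submodule.mapQ (I k) (I j) LinearMap.id (fun x hx => hI h hx) (v k) = v j}
  add_mem' := by
    intro v w hv hw j k h
    simp only [Pi.add_apply, map_add, hv j k h, hw j k h]
  zero_mem' := by
    intro j k h
    simp
  smul_mem' := by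
    intro c v hv j k h
    simp only [Pi.smul_apply, map_smul, hv j k h]

/-- The canonical map `R → lim_← R/I_j`. -/
def toCompat (I : ℕ → Ideal R) (hI : Antitone I) (f : R) : compatFamilies I hI :=
  ⟨fun _ => Submodule.Quotient.mk f, fun _ _ _ => rfl⟩

/-- `ord(f) = sup {j : f ∈ I_j} ∈ ℕ ∪ {∞}`. -/
noncomputable def ordI (I : ℕ → Ideal R) (f : R) : ℕ∞ :=
  ⨆ j ∈ {j : ℕ | f ∈ I j}, (j : ℕ∞)

open Polynomial

theorem Polynomial.eq_zero_of_forall_eval_natCast_eq_zero {A : Type*} [CommRing A] [Algebra ℚ A]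
    {P : A[X]} (h : ∀ n : ℕ, P.eval (n : A) = 0) : P = 0 := by
  have hfact : IsUnit (P.natDegree.factorial : A) := by
    simpa using (IsUnit.mk0 (P.natDegree.factorial : ℚ) (by positivity)).map (algebraMap ℚ A)
  have hdiff := congrFun P.fwdDiff_iter_degree_eq_factorial 0
  simp only [fwdDiff_iter_eq_sum_shift, zero_add, nsmul_one, h, smul_zero,
    Finset.sum_const_zero, Pi.smul_apply, Pi.natCast_apply, smul_eq_mul] at hdiff
  rw [← leadingCoeff_eq_zero]
  exact (hfact.mul_left_eq_zero).mp hdiff.symm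

noncomputable def binomPoly (k : ℕ) : ℚ[X] := (k.factorial : ℚ)⁻¹ • descPochhammer ℚ k

theorem binomPoly_aeval_natCast {B : Type*} [CommRing B] [Algebra ℚ B] (n k : ℕ) :
    aeval (n : B) (binomPoly k) = n.choose k := by
  rw [← map_natCast (algebraMap ℚ B), aeval_algebraMap_apply, aeval_def, Algebra.algebraMap_self,
    eval₂_id, binomPoly, eval_smul, smul_eq_mul, descPochhammer_eval_eq_descFactorial,
    Nat.descFactorial_eq_factorial_mul_choose, Nat.cast_mul, inv_mul_cancel_left₀, map_natCast]
  exact_mod_cast k.factorial_ne_zero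

theorem descPochhammer_succ_coeff_one {A : Type*} [CommRing A] (k : ℕ) :
    (descPochhammer A (k + 1)).coeff 1 = (-1) ^ k * k.factorial := by
  rw [descPochhammer_succ_left, coeff_X_mul, coeff_zero_eq_eval_zero, eval_comp, eval_sub,
    eval_X, eval_one, zero_sub, descPochhammer_eval_eq_prod_range]
  have : ∀ j : ℕ, (-1 : A) - j = -1 * ((j + 1 : ℕ) : A) := fun j => by push_cast; ring
  simp_rw [this, Finset.prod_mul_distrib, Finset.prod_const, Finset.card_range,
    ← Nat.cast_prod, Finset.prod_range_add_one_eq_factorial]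

theorem binomPoly_coeff_one {k : ℕ} (hk : k ≠ 0) :
    (binomPoly k).coeff 1 = (-1) ^ (k + 1) / k := by
  obtain ⟨k, rfl⟩ := Nat.exists_eq_add_one_of_ne_zero hk
  rw [binomPoly, coeff_smul, descPochhammer_succ_coeff_one, Nat.factorial_succ, smul_eq_mul]
  have : (k.factorial : ℚ) ≠ 0 := by positivity
  push_cast
  field_simp
  ring

theorem binomPoly_zero_coeff_one : (binomPoly 0).coeff 1 = 0 := by
  simp [binomPoly, coeff_one]

noncomputable def truncLog {S M : Type*} [CommSemiring S] [AddCommGroup M] [Module S M]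
    [Module ℚ M] [SMulCommClass S ℚ M] (N : Module.End S M) (n : ℕ) : Module.End S M where
  toFun x := ∑ j ∈ Finset.Icc 1 n, ((-1 : ℚ) ^ (j + 1) / (j : ℚ)) • (N ^ j) x
  map_add' x y := by simp only [map_add, smul_add, Finset.sum_add_distrib]
  map_smul' c x := by simp only [map_smul, smul_comm _ c, Finset.smul_sum, RingHom.id_apply]

theorem Module.End.add_one_pow_apply {S M : Type*} [CommSemiring S] [AddCommMonoid M]
    [Module S M] (N : Module.End S M) (n : ℕ) (x : M) :
    ((N + 1) ^ n) x = ∑ k ∈ Finset.range (n + 1), n.choose k • (N ^ k) x := by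
  rw [(Commute.one_right N).add_pow, LinearMap.sum_apply]
  simp [Module.End.mul_apply, Module.End.natCast_apply]

section UnipotentLog

variable {S A B : Type*} [CommSemiring S] [CommRing A] [Algebra S A] [CommRing B] [Algebra ℚ B]

noncomputable def newtonPoly (φ : A →+* B) (N : Module.End S A) (m : ℕ) (x : A) : B[X] :=
  ∑ k ∈ Finset.range (m + 1), (binomPoly k).map (algebraMap ℚ B) * C (φ ((N ^ k) x))

variable {φ : A →+* B} {N : Module.End S A} {m : ℕ}

theorem newtonPoly_eval_natCast (hφ : ∀ k, m < k → ∀ x, φ ((N ^ k) x) = 0) (x : A) (n : ℕ) :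
    (newtonPoly φ N m x).eval (n : B) = φ (((N + 1) ^ n) x) := by
  set u : ℕ → B := fun k => n.choose k * φ ((N ^ k) x)
  have hu : ∀ k ≥ min m n + 1, u k = 0 := fun k hk => by
    rcases le_or_gt k n with hkn | hnk
    · simp only [u, hφ k (by omega), mul_zero]
    · simp only [u, Nat.choose_eq_zero_of_lt hnk, Nat.cast_zero, zero_mul]
  calc (newtonPoly φ N m x).eval (n : B)
      = ∑ k ∈ Finset.range (m + 1), u k := by
        simp only [newtonPoly, eval_finsetSum, eval_mul, eval_map_algebraMap, eval_C,
          binomPoly_aeval_natCast, u]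
    _ = ∑ k ∈ Finset.range (n + 1), u k := by
        rw [Finset.eventually_constant_sum hu (n := m + 1) (by omega),
          Finset.eventually_constant_sum hu (n := n + 1) (by omega)]
    _ = φ (((N + 1) ^ n) x) := by
        simp only [Module.End.add_one_pow_apply, map_sum, nsmul_eq_mul, map_mul, map_natCast, u]

variable (σ : A →ₐ[S] A)

theorem newtonPoly_mul (hφ : ∀ k, m < k → ∀ x, φ (((σ.toLinearMap - 1) ^ k) x) = 0) (x y : A) :
    newtonPoly φ (σ.toLinearMap - 1) m (x * y) =
      newtonPoly φ (σ.toLinearMap - 1) m x * newtonPoly φ (σ.toLinearMap - 1) m y := by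
  have hpow : ∀ (n : ℕ) (z : A), (σ.toLinearMap ^ n) z = (σ ^ n) z := fun n z => by
    rw [Module.End.pow_apply, AlgHom.coe_pow]; rfl
  rw [← sub_eq_zero]
  refine Polynomial.eq_zero_of_forall_eval_natCast_eq_zero fun n => ?_
  simp only [eval_sub, eval_mul, newtonPoly_eval_natCast hφ, sub_add_cancel, hpow, map_mul,
    sub_self]

variable [Algebra ℚ A]

theorem newtonPoly_coeff_one (x : A) :
    (newtonPoly φ N m x).coeff 1 = φ (truncLog N m x) := by
  have hsub : Finset.Icc 1 m ⊆ Finset.range (m + 1) := fun k hk => by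
    simp only [Finset.mem_Icc, Finset.mem_range] at hk ⊢; omega
  simp only [newtonPoly, finsetSum_coeff, coeff_mul_C, coeff_map, truncLog, LinearMap.coe_mk,
    AddHom.coe_mk, map_sum, map_rat_smul]
  refine (Finset.sum_subset hsub fun k hk hk' => ?_).symm.trans
    (Finset.sum_congr rfl fun k hk => ?_)
  · obtain rfl : k = 0 := by simp only [Finset.mem_Icc, Finset.mem_range] at hk hk'; omega
    rw [binomPoly_zero_coeff_one, map_zero, zero_mul]
  · rw [binomPoly_coeff_one (by simp only [Finset.mem_Icc] at hk; omega), Algebra.smul_def]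

theorem map_truncLog_mul (hφ : ∀ k, m < k → ∀ x, φ (((σ.toLinearMap - 1) ^ k) x) = 0) (x y : A) :
    φ (truncLog (σ.toLinearMap - 1) m (x * y)) =
      φ x * φ (truncLog (σ.toLinearMap - 1) m y) +
        φ y * φ (truncLog (σ.toLinearMap - 1) m x) := by
  have hcoeff_zero : ∀ z, (newtonPoly φ (σ.toLinearMap - 1) m z).coeff 0 = φ z := fun z => by
    rw [coeff_zero_eq_eval_zero, ← Nat.cast_zero, newtonPoly_eval_natCast hφ, pow_zero,
      Module.End.one_apply]
  rw [← newtonPoly_coeff_one, newtonPoly_mul σ hφ, mul_coeff_one, hcoeff_zero, hcoeff_zero,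
    newtonPoly_coeff_one, newtonPoly_coeff_one]
  ring

theorem truncLog_mul_sub_mem (J : Ideal A)
    (hJ : ∀ k, m < k → ∀ x, ((σ.toLinearMap - 1) ^ k) x ∈ J) (x y : A) :
    truncLog (σ.toLinearMap - 1) m (x * y) -
      (x * truncLog (σ.toLinearMap - 1) m y + y * truncLog (σ.toLinearMap - 1) m x) ∈ J := by
  rw [← Ideal.Quotient.mk_eq_mk_iff_sub_mem]
  simpa only [map_add, map_mul] using
    map_truncLog_mul σ (fun k hk x => Ideal.Quotient.eq_zero_iff_mem.2 (hJ k hk x)) x y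

end UnipotentLog

section Filtration

variable {S A : Type*} [CommSemiring S] [CommRing A] [Algebra S A] (I : ℕ → Ideal A)

theorem exists_mem_ordI_eq (hI0 : I 0 = ⊤) {x : A} (h : ordI I x < ⊤) :
    ∃ k : ℕ, x ∈ I k ∧ ordI I x = k := by
  have : Nonempty {j : ℕ | x ∈ I j} := ⟨⟨0, by simp [hI0]⟩⟩
  rw [ordI, iSup_subtype'] at h ⊢
  obtain ⟨⟨k, hk⟩, hkeq⟩ := ENat.exists_eq_iSup_of_lt_top h
  exact ⟨k, hk, hkeq.symm⟩

theorem coe_le_ordI {x : A} {k : ℕ} (hx : x ∈ I k) : (k : ℕ∞) ≤ ordI I x :=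
  le_iSup₂ (f := fun j (_ : j ∈ {j : ℕ | x ∈ I j}) => (j : ℕ∞)) k hx

variable (hIan : Antitone I)

theorem eq_of_forall_sub_mem (hsep : Function.Injective (toCompat I hIan)) {x y : A}
    (h : ∀ m, x - y ∈ I m) : x = y :=
  hsep (Subtype.ext (funext fun m => (Submodule.Quotient.eq _).2 (h m)))

theorem exists_forall_sub_mem (hcomplete : Function.Surjective (toCompat I hIan)) (s : ℕ → A)
    (hs : ∀ m n, m ≤ n → s n - s m ∈ I m) : ∃ ℓ, ∀ m, ℓ - s m ∈ I m := by
  obtain ⟨ℓ, hℓ⟩ := hcomplete ⟨fun m => Submodule.Quotient.mk (s m), fun j k hjk =>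
    (Submodule.Quotient.eq _).2 (hs j k hjk)⟩
  exact ⟨ℓ, fun m => (Submodule.Quotient.eq _).1 (congrFun (congrArg Subtype.val hℓ) m)⟩

theorem exists_derivation_forall_sub_mem (hcomplete : Function.Bijective (toCompat I hIan))
    (L : ℕ → A →ₗ[S] A) (hcauchy : ∀ x m n, m ≤ n → L n x - L m x ∈ I m)
    (hleib : ∀ n x y, L n (x * y) - (x * L n y + y * L n x) ∈ I n) :
    ∃ ξ : Derivation S A A, ∀ x m, ξ x - L m x ∈ I m := by
  choose ξ hξ using fun x =>
    exists_forall_sub_mem I hIan hcomplete.2 (fun n => L n x) (hcauchy x)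
  have hext : ∀ a b, (∀ m, Ideal.Quotient.mk (I m) a = Ideal.Quotient.mk (I m) b) → a = b :=
    fun a b h => eq_of_forall_sub_mem I hIan hcomplete.1 fun m =>
      (Ideal.Quotient.mk_eq_mk_iff_sub_mem a b).1 (h m)
  have hξ' : ∀ m x, Ideal.Quotient.mk (I m) (ξ x) = Ideal.Quotient.mk (I m) (L m x) :=
    fun m x => (Ideal.Quotient.mk_eq_mk_iff_sub_mem _ _).2 (hξ x m)
  have hleib' : ∀ m x y, Ideal.Quotient.mk (I m) (L m (x * y)) =
      Ideal.Quotient.mk (I m) (x * L m y + y * L m x) :=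
    fun m x y => (Ideal.Quotient.mk_eq_mk_iff_sub_mem _ _).2 (hleib m x y)
  refine ⟨Derivation.mk' { toFun := ξ, map_add' := ?_, map_smul' := ?_ } ?_, hξ⟩
  · refine fun x y => hext _ _ fun m => ?_
    simp only [map_add, hξ']
  · refine fun c x => hext _ _ fun m => ?_
    rw [hξ', map_smul, RingHom.id_apply, Algebra.smul_def, Algebra.smul_def, map_mul, map_mul,
      hξ']
  · refine fun x y => hext _ _ fun m => ?_
    simp only [LinearMap.coe_mk, AddHom.coe_mk, smul_eq_mul, map_add, map_mul, hξ', hleib']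

end Filtration

section TruncLogFiltration

variable {S A : Type*} [CommSemiring S] [CommRing A] [Algebra S A] {I : ℕ → Ideal A}
  {N : Module.End S A}

theorem pow_apply_mem (hN : ∀ j, ∀ x ∈ I j, N x ∈ I (j + 1)) (j : ℕ) {k : ℕ} {x : A}
    (hx : x ∈ I k) : (N ^ j) x ∈ I (k + j) := by
  induction j with
  | zero => simpa using hx
  | succ j ih => rw [pow_succ', Module.End.mul_apply, ← add_assoc]; exact hN _ _ ih

theorem pow_apply_mem_of_le (hI0 : I 0 = ⊤) (hIan : Antitone I)
    (hN : ∀ j, ∀ x ∈ I j, N x ∈ I (j + 1)) {m k : ℕ} (hmk : m ≤ k) (x : A) : (N ^ k) x ∈ I m :=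
  hIan hmk (by simpa using pow_apply_mem hN k (hI0 ▸ Submodule.mem_top : x ∈ I 0))

variable [Algebra ℚ A]

theorem truncLog_sub_truncLog_mem (hI0 : I 0 = ⊤) (hIan : Antitone I)
    (hN : ∀ j, ∀ x ∈ I j, N x ∈ I (j + 1)) {m n : ℕ} (h : m ≤ n) (x : A) :
    truncLog N n x - truncLog N m x ∈ I m := by
  simp only [truncLog, LinearMap.coe_mk, AddHom.coe_mk]
  rw [← Finset.sum_sdiff (Finset.Icc_subset_Icc_right h), add_sub_cancel_right]
  refine Submodule.sum_mem _ fun k hk => ?_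
  simp only [Finset.mem_sdiff, Finset.mem_Icc] at hk
  exact Submodule.smul_of_tower_mem _ _ (pow_apply_mem_of_le hI0 hIan hN (by omega) x)

theorem truncLog_mem (hIan : Antitone I) (hN : ∀ j, ∀ x ∈ I j, N x ∈ I (j + 1)) {j : ℕ} {x : A}
    (hx : x ∈ I j) (n : ℕ) : truncLog N n x ∈ I (j + 1) := by
  simp only [truncLog, LinearMap.coe_mk, AddHom.coe_mk]
  refine Submodule.sum_mem _ fun k hk => ?_
  simp only [Finset.mem_Icc] at hk
  exact Submodule.smul_of_tower_mem _ _ (hIan (by omega) (pow_apply_mem hN k hx))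

theorem truncLog_sub_apply_mem (hIan : Antitone I) (hN : ∀ j, ∀ x ∈ I j, N x ∈ I (j + 1))
    {k : ℕ} {x : A} (hx : N x ∈ I k) : truncLog N (k + 1) x - N x ∈ I (k + 1) := by
  have hIcc : Finset.Icc 1 (k + 1) = insert 1 (Finset.Icc 2 (k + 1)) := by
    ext j; simp only [Finset.mem_Icc, Finset.mem_insert]; omega
  simp only [truncLog, LinearMap.coe_mk, AddHom.coe_mk]
  have hfirst : ((-1 : ℚ) ^ (1 + 1) / ((1 : ℕ) : ℚ)) • (N ^ 1) x = N x := by norm_num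
  rw [hIcc, Finset.sum_insert (by simp), hfirst, add_sub_cancel_left]
  refine Submodule.sum_mem _ fun j hj => Submodule.smul_of_tower_mem _ _ ?_
  obtain ⟨i, rfl⟩ : ∃ i, j = i + 1 := ⟨j - 1, by simp only [Finset.mem_Icc] at hj; omega⟩
  rw [pow_succ, Module.End.mul_apply]
  exact hIan (by simp only [Finset.mem_Icc] at hj; omega) (pow_apply_mem hN i hx)

end TruncLogFiltration

theorem statement5_general
    (I : ℕ → Ideal R) (hI0 : I 0 = ⊤) (hIan : Antitone I)
    (hcomplete : Function.Bijective (toCompat I hIan))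
    (g : R ≃ₐ[𝕜] R)
    (hg : ∀ j : ℕ, ∀ f ∈ I j, g f - f ∈ I (j + 1)) :
    ∃ ξ : Derivation 𝕜 R R,
      (∀ f : R, ∀ m : ℕ, ∃ n₀ : ℕ, ∀ n ≥ n₀,
        ξ f - ∑ j ∈ Finset.Icc 1 n,
          ((((-1 : ℚ) ^ (j + 1)) / (j : ℚ)) •
            (((g.toLinearMap - LinearMap.id : Module.End 𝕜 R) ^ j) f)) ∈ I m) ∧
      (∀ j : ℕ, ∀ f ∈ I j, ξ f ∈ I (j + 1)) ∧
      (∀ f : R, ordI I (g f - f) < ⊤ →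
        ordI I (g f - f - ξ f) > ordI I (g f - f)) := by
  set D : Module.End 𝕜 R := g.toLinearMap - LinearMap.id
  have hD : ∀ j, ∀ x ∈ I j, D x ∈ I (j + 1) := hg
  obtain ⟨ξ, hξ⟩ := exists_derivation_forall_sub_mem I hIan hcomplete (truncLog D)
    (fun x _ _ h => truncLog_sub_truncLog_mem hI0 hIan hD h x)
    (fun n => truncLog_mul_sub_mem (g : R →ₐ[𝕜] R) (I n) fun k hk =>
      pow_apply_mem_of_le hI0 hIan hD hk.le)
  refine ⟨ξ, fun f m => ⟨m, fun n hn => hIan hn (hξ f n)⟩, fun j f hf => ?_, fun f hf => ?_⟩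
  · simpa using add_mem (hξ f (j + 1)) (truncLog_mem hIan hD hf (j + 1))
  · obtain ⟨k, hk, hord⟩ := exists_mem_ordI_eq I hI0 hf
    have hmem : D f - ξ f ∈ I (k + 1) := by
      simpa using
        neg_mem (add_mem (hξ f (k + 1)) (truncLog_sub_apply_mem hIan hD (hk : D f ∈ I k)))
    rw [hord]
    exact (Nat.cast_lt.2 k.lt_succ_self).trans_le (coe_le_ordI I hmem)

/-- over a ring containing ℚ, for a separated complete filtered ring and a
topologically unipotent 𝕜-algebra automorphism `g` (i.e. `g − 1` and `g⁻¹ − 1` map `I_j`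
into `I_{j+1}`), the logarithmic series `ln(g)` converges in the filtration topology and
defines a 𝕜-linear derivation `ξ` with `ξ(I_j) ⊆ I_{j+1}`, and moreover
`ord((g − 1 − ξ)(f)) > ord((g−1)(f))` whenever `ord((g−1)(f)) < ∞`. -/
theorem statement5
    (I : ℕ → Ideal R) (hI0 : I 0 = ⊤) (hIan : Antitone I)
    (hImul : ∀ j k : ℕ, I j * I k ≤ I (j + k))
    (hcomplete : Function.Bijective (toCompat I hIan))
    (g : R ≃ₐ[𝕜] R)
    (hg : ∀ j : ℕ, ∀ f ∈ I j, g f - f ∈ I (j + 1))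
    (hg' : ∀ j : ℕ, ∀ f ∈ I j, g.symm f - f ∈ I (j + 1)) :
    ∃ ξ : Derivation 𝕜 R R,
      (∀ f : R, ∀ m : ℕ, ∃ n₀ : ℕ, ∀ n ≥ n₀,
        ξ f - ∑ j ∈ Finset.Icc 1 n,
          ((((-1 : ℚ) ^ (j + 1)) / (j : ℚ)) •
            (((g.toLinearMap - LinearMap.id : Module.End 𝕜 R) ^ j) f)) ∈ I m) ∧
      (∀ j : ℕ, ∀ f ∈ I j, ξ f ∈ I (j + 1)) ∧
      (∀ f : R, ordI I (g f - f) < ⊤ →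
        ordI I (g f - f - ξ f) > ordI I (g f - f)) :=
  statement5_general I hI0 hIan hcomplete g hg
end
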